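/- arXiv:2205.13426 — 2 statements merged into one kernel-verified Lean document; each statement's English description precedes it below -/
import Mathlib

section
/- Let n ≥ 2, let G be a simple graph on a vertex set V with |V| = n, let p : {1,...,9} → ℝ satisfy p_d > 0 for all d and ∑_{d=1}^9 p_d = 1, set δ = min_d p_d, and fix 0 < ε < 1. Assign to each edge f of G an independent random digit D_f ∈ {1,...,9} with P(D_f = d) = p_d (i.e., the digits are distributed according to the product measure over the edges). For S ⊆ V let e(S) be the number of edges of G with both endpoints in S and let X_{S,d} be the number of such edges f with D_f = d. Then the probability that there exist a digit d ∈ {1,...,9} and a set S ⊆ V with e(S) ≥ (18/(δ·ε²))·|S|·log n and |X_{S,d} − p_d·e(S)| > ε·p_d·e(S) is at most 18·∑_{k=2}^{n} C(n,k)·n^{−6k}. -/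
/-!
For a fixed digit `d` and vertex set `S`, the count `X_{S,d}` is a sum of `e(S)` independent
indicators of mean `p_d`, so the multiplicative Chernoff bound makes a deviation by more than
`ε p_d e(S)` have probability at most `2 exp (-ε² p_d e(S) / 3)`. When `e(S) ≥ C |S| log n` with
`C = 18 / (δ ε²)` this is at most `2 n^(-6|S|)`. Sets with `|S| ≤ 1` span no edge and cannot
deviate, so a union bound over the 9 digits and the `C(n, k)` sets of each size `k ≥ 2` concludes.
-/

open MeasureTheory ProbabilityTheory Real Finset
open scoped Classical

lemma exp_neg_le_one_sub_add_sq_div_two {x : ℝ} (hx : 0 ≤ x) :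
    exp (-x) ≤ 1 - x + x ^ 2 / 2 := by
  -- `(1 + x + x ^ 2 / 2) * (1 - x + x ^ 2 / 2) = 1 + x ^ 4 / 4`
  have h := quadratic_le_exp_of_nonneg hx
  rw [exp_neg, inv_le_iff_one_le_mul₀ (exp_pos x)]
  nlinarith [sq_nonneg x, sq_nonneg (x ^ 2), mul_le_mul_of_nonneg_left h
    (by nlinarith : (0 : ℝ) ≤ 1 - x + x ^ 2 / 2)]

lemma sq_div_three_le_one_add_mul_log_one_add_sub {x : ℝ} (h0 : 0 ≤ x) (h1 : x ≤ 1) :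
    x ^ 2 / 3 ≤ (1 + x) * log (1 + x) - x := by
  have hlog := mul_le_mul_of_nonneg_left (le_log_one_add_of_nonneg h0) (by linarith : 0 ≤ 1 + x)
  have hsimp : (1 + x) * (2 * x / (x + 2)) - x = x ^ 2 / (x + 2) := by field_simp; ring
  have hden : x ^ 2 / 3 ≤ x ^ 2 / (x + 2) := by gcongr; linarith
  linarith

lemma exp_mul_le_one_add_mul_exp_sub_one {y : ℝ} (h0 : 0 ≤ y) (h1 : y ≤ 1) (t : ℝ) :
    exp (t * y) ≤ 1 + y * (exp t - 1) := by
  have := convexOn_exp.2 (Set.mem_univ 0) (Set.mem_univ t) (sub_nonneg.2 h1) h0 (by ring)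
  simp only [smul_eq_mul, mul_zero, zero_add, exp_zero, mul_one, mul_comm y t] at this
  linarith

section Chernoff

variable {Ω ι : Type*} [MeasurableSpace Ω] {μ : Measure Ω} [IsProbabilityMeasure μ]
  {Y : ι → Ω → ℝ}

lemma mgf_le_exp_integral_mul {X : Ω → ℝ} (hX : Measurable X) (h01 : ∀ ω, X ω ∈ Set.Icc 0 1)
    (t : ℝ) : mgf X μ t ≤ exp (μ[X] * (exp t - 1)) := by
  have hXint : Integrable X μ := .of_mem_Icc 0 1 hX.aemeasurable (ae_of_all _ h01)
  calc mgf X μ t ≤ ∫ ω, 1 + X ω * (exp t - 1) ∂μ :=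
        integral_mono (integrable_exp_mul_of_mem_Icc hX.aemeasurable (ae_of_all _ h01))
          ((integrable_const 1).add (hXint.mul_const _))
          fun ω => exp_mul_le_one_add_mul_exp_sub_one (h01 ω).1 (h01 ω).2 t
    _ = 1 + μ[X] * (exp t - 1) := by
        rw [integral_add (integrable_const 1) (hXint.mul_const _), integral_mul_const]; simp
    _ ≤ exp (μ[X] * (exp t - 1)) := by linarith [add_one_le_exp (μ[X] * (exp t - 1))]

lemma mgf_sum_le_exp (hmeas : ∀ i, Measurable (Y i)) (hindep : iIndepFun Y μ)
    (h01 : ∀ i ω, Y i ω ∈ Set.Icc 0 1) (s : Finset ι) (t : ℝ) :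
    mgf (∑ i ∈ s, Y i) μ t ≤ exp ((∑ i ∈ s, μ[Y i]) * (exp t - 1)) := by
  rw [hindep.mgf_sum hmeas, sum_mul, exp_sum]
  exact prod_le_prod (fun _ _ => mgf_nonneg) fun i _ =>
    mgf_le_exp_integral_mul (hmeas i) (h01 i) t

lemma integrable_exp_mul_sum_of_mem_Icc (hmeas : ∀ i, Measurable (Y i))
    (hindep : iIndepFun Y μ) (h01 : ∀ i ω, Y i ω ∈ Set.Icc 0 1) (s : Finset ι) (t : ℝ) :
    Integrable (fun ω => exp (t * (∑ i ∈ s, Y i) ω)) μ :=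
  hindep.integrable_exp_mul_sum hmeas fun i _ =>
    integrable_exp_mul_of_mem_Icc (hmeas i).aemeasurable (ae_of_all _ (h01 i))

lemma measureReal_sum_ge_le (hmeas : ∀ i, Measurable (Y i)) (hindep : iIndepFun Y μ)
    (h01 : ∀ i ω, Y i ω ∈ Set.Icc 0 1) (s : Finset ι)
    {ε : ℝ} (hε0 : 0 ≤ ε) (hε1 : ε ≤ 1) :
    μ.real {ω | (1 + ε) * ∑ i ∈ s, μ[Y i] ≤ ∑ i ∈ s, Y i ω}
      ≤ exp (-(ε ^ 2 * ∑ i ∈ s, μ[Y i]) / 3) := by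
  set M := ∑ i ∈ s, μ[Y i]
  have hM : 0 ≤ M := sum_nonneg fun i _ => integral_nonneg fun ω => (h01 i ω).1
  have h := measure_ge_le_exp_mul_mgf (t := log (1 + ε)) ((1 + ε) * M)
    (log_nonneg (by linarith))
    (integrable_exp_mul_sum_of_mem_Icc hmeas hindep h01 s _)
  simp only [Finset.sum_apply] at h
  refine h.trans ?_
  have hε : exp (log (1 + ε)) = 1 + ε := exp_log (by linarith)
  calc _ ≤ exp (-log (1 + ε) * ((1 + ε) * M)) * exp (M * (exp (log (1 + ε)) - 1)) :=
        mul_le_mul_of_nonneg_left (mgf_sum_le_exp hmeas hindep h01 s _) (exp_pos _).le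
    _ = exp (-(((1 + ε) * log (1 + ε) - ε) * M)) := by rw [← exp_add, hε]; ring_nf
    _ ≤ exp (-(ε ^ 2 * M) / 3) := by
        gcongr
        nlinarith [sq_div_three_le_one_add_mul_log_one_add_sub hε0 hε1]

lemma measureReal_sum_le_le (hmeas : ∀ i, Measurable (Y i)) (hindep : iIndepFun Y μ)
    (h01 : ∀ i ω, Y i ω ∈ Set.Icc 0 1) (s : Finset ι)
    {ε : ℝ} (hε0 : 0 ≤ ε) :
    μ.real {ω | ∑ i ∈ s, Y i ω ≤ (1 - ε) * ∑ i ∈ s, μ[Y i]}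
      ≤ exp (-(ε ^ 2 * ∑ i ∈ s, μ[Y i]) / 2) := by
  set M := ∑ i ∈ s, μ[Y i]
  have hM : 0 ≤ M := sum_nonneg fun i _ => integral_nonneg fun ω => (h01 i ω).1
  have h := measure_le_le_exp_mul_mgf ((1 - ε) * M) (neg_nonpos.2 hε0)
    (integrable_exp_mul_sum_of_mem_Icc hmeas hindep h01 s _)
  simp only [Finset.sum_apply] at h
  refine h.trans ?_
  calc _ ≤ exp (-(-ε) * ((1 - ε) * M)) * exp (M * (exp (-ε) - 1)) :=
        mul_le_mul_of_nonneg_left (mgf_sum_le_exp hmeas hindep h01 s _) (exp_pos _).le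
    _ = exp (M * (exp (-ε) - 1 + ε - ε ^ 2)) := by rw [← exp_add]; ring_nf
    _ ≤ exp (-(ε ^ 2 * M) / 2) := by
        gcongr
        nlinarith [exp_neg_le_one_sub_add_sq_div_two hε0]

lemma measureReal_abs_sum_sub_gt_le (hmeas : ∀ i, Measurable (Y i)) (hindep : iIndepFun Y μ)
    (h01 : ∀ i ω, Y i ω ∈ Set.Icc 0 1) (s : Finset ι)
    {ε : ℝ} (hε0 : 0 ≤ ε) (hε1 : ε ≤ 1) :
    μ.real {ω | ε * ∑ i ∈ s, μ[Y i] < |∑ i ∈ s, Y i ω - ∑ i ∈ s, μ[Y i]|}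
      ≤ 2 * exp (-(ε ^ 2 * ∑ i ∈ s, μ[Y i]) / 3) := by
  set M := ∑ i ∈ s, μ[Y i]
  have hM : 0 ≤ M := sum_nonneg fun i _ => integral_nonneg fun ω => (h01 i ω).1
  have hsplit : {ω | ε * M < |∑ i ∈ s, Y i ω - M|} ⊆
      {ω | (1 + ε) * M ≤ ∑ i ∈ s, Y i ω} ∪ {ω | ∑ i ∈ s, Y i ω ≤ (1 - ε) * M} := by
    intro ω (hω : ε * M < _)
    rcases lt_abs.1 hω with h | h
    · exact Or.inl (by simp only [Set.mem_ofPred_eq]; linarith)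
    · exact Or.inr (by simp only [Set.mem_ofPred_eq]; linarith)
  have h23 : exp (-(ε ^ 2 * M) / 2) ≤ exp (-(ε ^ 2 * M) / 3) := by
    have := mul_nonneg (sq_nonneg ε) hM
    exact exp_le_exp.2 (by linarith)
  calc _ ≤ _ := measureReal_mono hsplit
    _ ≤ _ := measureReal_union_le _ _
    _ ≤ _ := add_le_add (measureReal_sum_ge_le hmeas hindep h01 s hε0 hε1)
        ((measureReal_sum_le_le hmeas hindep h01 s hε0).trans h23)
    _ = _ := by ring

lemma measureReal_abs_card_filter_sub_gt_le {β : Type*} [MeasurableSpace β]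
    [MeasurableSingletonClass β] [DecidableEq β] {D : ι → Ω → β}
    (hmeas : ∀ i, Measurable (D i)) (hindep : iIndepFun D μ) {b : β} {q : ℝ}
    (hq : ∀ i, μ.real {ω | D i ω = b} = q)
    (s : Finset ι) {ε : ℝ} (hε0 : 0 ≤ ε) (hε1 : ε ≤ 1) :
    μ.real {ω | ε * (q * #s) < |(#{i ∈ s | D i ω = b} : ℝ) - q * #s|}
      ≤ 2 * exp (-(ε ^ 2 * (q * #s)) / 3) := by
  set X : ι → Ω → ℝ := fun i ω => if D i ω = b then 1 else 0
  have hXmeas : ∀ i, Measurable (X i) := fun i =>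
    Measurable.ite (hmeas i (measurableSet_singleton b)) measurable_const measurable_const
  have hXindep : iIndepFun X μ :=
    hindep.comp (fun _ x => if x = b then (1 : ℝ) else 0)
      fun _ => Measurable.ite (measurableSet_singleton b) measurable_const measurable_const
  have hX01 : ∀ i ω, X i ω ∈ Set.Icc 0 1 := fun i ω => by
    by_cases h : D i ω = b <;> simp [X, h]
  have hXmean : ∑ i ∈ s, μ[X i] = q * #s := by
    have hXi : ∀ i, μ[X i] = q := fun i => by
      have hA : MeasurableSet {ω | D i ω = b} := hmeas i (measurableSet_singleton b)
      rw [← hq i, ← integral_indicator_one hA]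
      congr 1 with ω
      simp [X, Set.indicator_apply]
    simp [hXi, mul_comm]
  have h := measureReal_abs_sum_sub_gt_le hXmeas hXindep hX01 s hε0 hε1
  simpa only [hXmean, X, sum_boole] using h

end Chernoff

lemma exp_neg_sq_mul_div_three_le_inv_pow {δ ε q m : ℝ} {k n : ℕ} (hδ : 0 < δ)
    (hδq : δ ≤ q) (hε : ε ≠ 0) (hn : 0 < n) (hm : 18 / (δ * ε ^ 2) * k * log n ≤ m) :
    exp (-(ε ^ 2 * (q * m)) / 3) ≤ ((n : ℝ) ^ (6 * k))⁻¹ := by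
  have hlog : 0 ≤ log n := log_natCast_nonneg n
  have hm0 : 0 ≤ m := le_trans (by positivity) hm
  rw [← exp_log (by positivity : (0 : ℝ) < n), ← exp_nat_mul, ← exp_neg, exp_le_exp]
  have hscale : ε ^ 2 * δ * (18 / (δ * ε ^ 2) * k * log n) = 18 * (k * log n) := by
    field_simp
  have hscaled := mul_le_mul_of_nonneg_left hm (by positivity : 0 ≤ ε ^ 2 * δ)
  have hq : ε ^ 2 * δ * m ≤ ε ^ 2 * (q * m) := by
    rw [mul_assoc]; gcongr
  push_cast
  linarith

lemma sum_finset_ite_two_le_card {V : Type*} [Fintype V] (f : ℕ → ℝ) :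
    ∑ S : Finset V, (if 2 ≤ #S then f #S else 0)
      = ∑ k ∈ Icc 2 (Fintype.card V), ((Fintype.card V).choose k : ℝ) * f k := by
  rw [← powerset_univ, sum_powerset_apply_card (fun k => if 2 ≤ k then f k else 0), card_univ]
  simp_rw [nsmul_eq_mul, mul_ite, mul_zero]
  rw [← sum_filter]
  congr 1
  ext k
  simp only [mem_filter, mem_range, mem_Icc]
  omega

namespace SimpleGraph

variable {V : Type*} [Fintype V] [DecidableEq V] (G : SimpleGraph V) [DecidableRel G.Adj]

def inducedEdges (S : Finset V) : Finset G.edgeSet :=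
  univ.filter fun f : G.edgeSet => ∀ v ∈ (f : Sym2 V), v ∈ S

lemma inducedEdges_eq_empty_of_card_le_one {S : Finset V} (hS : #S ≤ 1) :
    G.inducedEdges S = ∅ := by
  rw [inducedEdges, filter_eq_empty_iff]
  rintro ⟨e, he⟩ - hS'
  induction e using Sym2.ind with
  | _ a b =>
    exact G.ne_of_adj he
      (card_le_one.1 hS a (hS' a (Sym2.mem_mk_left a b)) b (hS' b (Sym2.mem_mk_right a b)))

lemma measureReal_inducedEdges_deviation_le {Ω β : Type*} [MeasurableSpace Ω]
    {μ : Measure Ω} [IsProbabilityMeasure μ] [MeasurableSpace β] [MeasurableSingletonClass β]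
    [DecidableEq β]
    {D : G.edgeSet → Ω → β} (hmeas : ∀ f, Measurable (D f)) (hindep : iIndepFun D μ)
    {b : β} {q δ ε : ℝ} (hq : ∀ f, μ.real {ω | D f ω = b} = q) (hδ : 0 < δ) (hδq : δ ≤ q)
    (hε0 : 0 < ε) (hε1 : ε ≤ 1) {n : ℕ} (hn : 0 < n) (S : Finset V) :
    μ.real {ω | 18 / (δ * ε ^ 2) * #S * log n ≤ #(G.inducedEdges S)
        ∧ ε * (q * #(G.inducedEdges S))
          < |(#{f ∈ G.inducedEdges S | D f ω = b} : ℝ) - q * #(G.inducedEdges S)|}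
      ≤ if 2 ≤ #S then 2 * ((n : ℝ) ^ (6 * #S))⁻¹ else 0 := by
  split_ifs with hS
  · by_cases hdense : 18 / (δ * ε ^ 2) * #S * log n ≤ #(G.inducedEdges S)
    · calc _ ≤ μ.real {ω | ε * (q * #(G.inducedEdges S))
              < |(#{f ∈ G.inducedEdges S | D f ω = b} : ℝ) - q * #(G.inducedEdges S)|} :=
            measureReal_mono fun ω hω => hω.2
        _ ≤ 2 * exp (-(ε ^ 2 * (q * #(G.inducedEdges S))) / 3) :=
            measureReal_abs_card_filter_sub_gt_le hmeas hindep hq _ hε0.le hε1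
        _ ≤ _ := by
            gcongr
            exact exp_neg_sq_mul_div_three_le_inv_pow hδ hδq hε0.ne' hn hdense
    · simp [hdense]
  · simp [G.inducedEdges_eq_empty_of_card_le_one (by omega : #S ≤ 1)]

end SimpleGraph

theorem antibenford_concentration_general
    {V : Type*} [Fintype V] [DecidableEq V]
    (n : ℕ) (hn : 2 ≤ n) (hcard : Fintype.card V = n)
    (G : SimpleGraph V) [DecidableRel G.Adj]
    {Ω : Type*} [MeasurableSpace Ω] (μ : Measure Ω) [IsProbabilityMeasure μ]
    (p : Fin 9 → ℝ) (hp : ∀ d, 0 < p d)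
    (δ : ℝ) (hδ : δ = Finset.univ.inf' Finset.univ_nonempty p)
    (ε : ℝ) (hε0 : 0 < ε) (hε1 : ε < 1)
    (D : G.edgeSet → Ω → Fin 9)
    (hmeas : ∀ f, Measurable (D f))
    (hindep : iIndepFun D μ)
    (hdist : ∀ f d, μ {ω | D f ω = d} = ENNReal.ofReal (p d)) :
    (μ {ω | ∃ d : Fin 9, ∃ S : Finset V,
        (18 / (δ * ε ^ 2)) * S.card * Real.log n
            ≤ ((Finset.univ.filter
                (fun f : G.edgeSet => ∀ v ∈ (f : Sym2 V), v ∈ S)).card : ℝ)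
        ∧ ε * (p d * ((Finset.univ.filter
                (fun f : G.edgeSet => ∀ v ∈ (f : Sym2 V), v ∈ S)).card : ℝ))
          < |((Finset.univ.filter
                (fun f : G.edgeSet =>
                  (∀ v ∈ (f : Sym2 V), v ∈ S) ∧ D f ω = d)).card : ℝ)
              - p d * ((Finset.univ.filter
                (fun f : G.edgeSet => ∀ v ∈ (f : Sym2 V), v ∈ S)).card : ℝ)|
        }).toReal
      ≤ 18 * ∑ k ∈ Finset.Icc 2 n, (n.choose k : ℝ) * ((n : ℝ) ^ (6 * k))⁻¹ := by
  have hδ0 : 0 < δ := hδ ▸ (lt_inf'_iff _).2 fun d _ => hp d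
  have hδp : ∀ d, δ ≤ p d := fun d => hδ ▸ inf'_le _ (mem_univ d)
  have hq : ∀ f d, μ.real {ω | D f ω = d} = p d := fun f d => by
    rw [measureReal_def, hdist, ENNReal.toReal_ofReal (hp d).le]
  calc (μ _).toReal
      = μ.real (⋃ d : Fin 9, ⋃ S : Finset V, {ω | 18 / (δ * ε ^ 2) * #S * log n
          ≤ #(G.inducedEdges S) ∧ ε * (p d * #(G.inducedEdges S))
            < |(#{f ∈ G.inducedEdges S | D f ω = d} : ℝ) - p d * #(G.inducedEdges S)|}) := by
        simp only [Set.ofPred_exists, SimpleGraph.inducedEdges, filter_filter]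
        rfl
    _ ≤ ∑ d : Fin 9, ∑ S : Finset V, if 2 ≤ #S then 2 * ((n : ℝ) ^ (6 * #S))⁻¹ else 0 := by
        refine (measureReal_iUnion_fintype_le _).trans (sum_le_sum fun d _ => ?_)
        refine (measureReal_iUnion_fintype_le _).trans (sum_le_sum fun S _ => ?_)
        exact G.measureReal_inducedEdges_deviation_le hmeas hindep (hq · d) hδ0 (hδp d) hε0
          hε1.le (by omega : 0 < n) S
    _ = 18 * ∑ k ∈ Icc 2 n, (n.choose k : ℝ) * ((n : ℝ) ^ (6 * k))⁻¹ := by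
        rw [sum_const, sum_finset_ite_two_le_card fun k => 2 * ((n : ℝ) ^ (6 * k))⁻¹, hcard,
          card_univ, Fintype.card_fin, nsmul_eq_mul, mul_sum, mul_sum]
        refine sum_congr rfl fun k _ => by push_cast; ring

/-- **Theorem 3 of the paper** (with explicit union-bound failure probability).
Assign to each edge of a simple graph `G` on `n ≥ 2` vertices an independent
random digit in `{1,…,9}` with distribution `p`, and let `δ = min_d p_d`.
For `S ⊆ V` let `e(S)` be the number of edges induced by `S` and `X_{S,d}` the
number of such edges carrying digit `d`.  Then the probability that some digit
`d` and some `S` with `e(S) ≥ (18/(δ·ε²))·|S|·log n` satisfy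
`|X_{S,d} − p_d·e(S)| > ε·p_d·e(S)` is at most
`18·∑_{k=2}^{n} C(n,k)·n^(−6k)`. -/
theorem antibenford_concentration
    {V : Type*} [Fintype V] [DecidableEq V]
    (n : ℕ) (hn : 2 ≤ n) (hcard : Fintype.card V = n)
    (G : SimpleGraph V) [DecidableRel G.Adj]
    {Ω : Type*} [MeasurableSpace Ω] (μ : Measure Ω) [IsProbabilityMeasure μ]
    (p : Fin 9 → ℝ) (hp : ∀ d, 0 < p d) (hsum : ∑ d, p d = 1)
    (δ : ℝ) (hδ : δ = Finset.univ.inf' Finset.univ_nonempty p)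
    (ε : ℝ) (hε0 : 0 < ε) (hε1 : ε < 1)
    (D : G.edgeSet → Ω → Fin 9)
    (hmeas : ∀ f, Measurable (D f))
    (hindep : iIndepFun D μ)
    (hdist : ∀ f d, μ {ω | D f ω = d} = ENNReal.ofReal (p d)) :
    (μ {ω | ∃ d : Fin 9, ∃ S : Finset V,
        (18 / (δ * ε ^ 2)) * S.card * Real.log n
            ≤ ((Finset.univ.filter
                (fun f : G.edgeSet => ∀ v ∈ (f : Sym2 V), v ∈ S)).card : ℝ)
        ∧ ε * (p d * ((Finset.univ.filter
                (fun f : G.edgeSet => ∀ v ∈ (f : Sym2 V), v ∈ S)).card : ℝ))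
          < |((Finset.univ.filter
                (fun f : G.edgeSet =>
                  (∀ v ∈ (f : Sym2 V), v ∈ S) ∧ D f ω = d)).card : ℝ)
              - p d * ((Finset.univ.filter
                (fun f : G.edgeSet => ∀ v ∈ (f : Sym2 V), v ∈ S)).card : ℝ)|
        }).toReal
      ≤ 18 * ∑ k ∈ Finset.Icc 2 n, (n.choose k : ℝ) * ((n : ℝ) ^ (6 * k))⁻¹ :=
  antibenford_concentration_general n hn hcard G μ p hp δ hδ ε hε0 hε1 D hmeas hindep hdist
end

section
/- Let n ≥ 2, let G be a simple graph on a vertex set V with |V| = n, let p : {1,...,9} → ℝ satisfy p_d > 0 for all d and ∑_{d=1}^9 p_d = 1, set δ = min_d p_d, and fix 0 < ε < 1. Assign to each edge f of G an independent random digit D_f ∈ {1,...,9} with P(D_f = d) = p_d. For S ⊆ V let e(S) be the number of edges of G with both endpoints in S, let X_{S,d} count such edges with digit d, and for e(S) > 0 let χ²(S) = ∑_{d=1}^9 (X_{S,d} − p_d·e(S))²/(p_d·e(S)) and ψ(S) = χ²(S)/|S|. Then with probability at least 1 − 18·∑_{k=2}^{n} C(n,k)·n^{−6k}, every nonempty S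 ⊆ V with e(S) ≥ (18/(δ·ε²))·|S|·log n satisfies ψ(S) ≤ ε²·e(S)/|S|, and in particular ψ(S) ≤ max over nonempty T ⊆ V of e(T)/|T|. -/
/-!
For a fixed vertex set `S` and digit `d`, the count `X_{S,d}` is a sum of `e(S)` independent
Bernoulli(`p_d`) variables. A Chernoff bound, with the exponent tuned using `δ ≤ p_d` and
`δ ≤ 1/9`, shows that `|X_{S,d} - p_d e(S)| ≥ (ε/3) √p_d e(S)` has probability at most
`2 n^{-6|S|}` as soon as `e(S) ≥ 18 |S| log n / (δ ε²)`; the lower tail needs no separate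
tuning because `e^{-θ} - 1 + θ ≤ e^θ - 1 - θ`. A union bound over the nine digits and
over all such `S` (each spans an edge, so `|S| ≥ 2`) costs `18 ∑_{k ≥ 2} C(n,k) n^{-6k}`. Off
this event every chi-square term is at most `ε² e(S) / 9`, so `χ²(S) ≤ ε² e(S) ≤ e(S)`.
-/

open MeasureTheory ProbabilityTheory
open scoped Classical

open Real Finset

lemma Real.exp_sub_one_sub_le_of_le_one {x : ℝ} (hx0 : 0 ≤ x) (hx1 : x ≤ 1) :
    exp x - 1 - x ≤ x ^ 2 / 2 + 2 / 9 * x ^ 3 := by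
  have h := Real.exp_bound (x := x) (by rwa [abs_of_nonneg hx0]) (n := 3) (by norm_num)
  simp only [sum_range_succ, sum_range_zero, abs_of_nonneg hx0] at h
  norm_num [Nat.factorial] at h
  linarith [(abs_le.1 h).2]

lemma Real.exp_neg_sub_one_add_le {x : ℝ} (hx : 0 ≤ x) :
    exp (-x) - 1 + x ≤ exp x - 1 - x := by
  have := self_le_sinh_iff.2 hx
  rw [sinh_eq] at this
  linarith

lemma Real.exp_mul_of_zero_or_one {x : ℝ} (hx : x = 0 ∨ x = 1) (s : ℝ) :
    exp (s * x) = 1 + (exp s - 1) * x := by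
  rcases hx with rfl | rfl <;> simp

lemma Real.exp_neg_mul_log_natCast {n : ℕ} (hn : 0 < n) (m : ℕ) :
    exp (-(m * log n)) = ((n : ℝ) ^ m)⁻¹ := by
  rw [exp_neg, exp_nat_mul, exp_log (by positivity)]

lemma exists_chernoff_exponent {δ p ε e K : ℝ} (hδ : 0 < δ) (hδp : δ ≤ p) (hδ9 : δ ≤ 1 / 9)
    (hε : 0 < ε) (hε1 : ε ≤ 1) (hK : 0 ≤ K) (he : 18 * K ≤ δ * ε ^ 2 * e) :
    ∃ θ, 0 ≤ θ ∧ -(θ * (ε / 3 * √p * e)) + e * p * (exp θ - 1 - θ) ≤ -(6 * K) := by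
  set s := √δ
  set r := √p
  have hs : 0 < s := sqrt_pos.2 hδ
  have hr : 0 < r := sqrt_pos.2 (hδ.trans_le hδp)
  have hs2 : s ^ 2 = δ := sq_sqrt hδ.le
  have hr2 : r ^ 2 = p := sq_sqrt (hδ.le.trans hδp)
  have hsr : s ≤ r := sqrt_le_sqrt hδp
  have hs3 : s ≤ 1 / 3 := by nlinarith
  have he0 : 0 ≤ e := by
    by_contra! h
    nlinarith [mul_pos hδ (pow_pos hε 2)]
  -- `δ ≤ p` keeps this `θ` below `3/5`, where the cubic Taylor bound is sharp enough; the
  -- factor `3/5` is tuned so that the exponent reaches `-6K` using only `δ ≤ 1/9`.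
  refine ⟨3 * s * ε / (5 * r), by positivity, ?_⟩
  set θ := 3 * s * ε / (5 * r) with hθ
  have hθ35 : θ ≤ 3 / 5 := by
    rw [hθ, div_le_iff₀ (by positivity)]
    nlinarith [mul_le_mul_of_nonneg_left hsr hε.le]
  have hlin : θ * (ε / 3 * r * e) = s * ε ^ 2 * e / 5 := by
    rw [hθ]; field_simp
  have hquad : p * θ ^ 2 = 9 / 25 * (s ^ 2 * ε ^ 2) := by
    rw [← hr2, hθ]; field_simp; ring
  have hcubic : p * θ ^ 3 ≤ 27 / 125 * (s ^ 2 * ε ^ 2) := by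
    have : p * θ ^ 3 ≤ p * θ ^ 2 * (3 / 5) := by
      rw [pow_succ, ← mul_assoc]
      exact mul_le_mul_of_nonneg_left hθ35 (by rw [← hr2]; positivity)
    linarith
  have hgrowth : p * (exp θ - 1 - θ) ≤ 19 / 250 * (s * ε ^ 2) := by
    have := mul_le_mul_of_nonneg_left (exp_sub_one_sub_le_of_le_one (by positivity)
      (hθ35.trans (by norm_num))) (hδ.le.trans hδp)
    nlinarith [mul_le_mul_of_nonneg_right hs3 (by positivity : 0 ≤ s * ε ^ 2)]
  have hmass : 54 * K ≤ s * ε ^ 2 * e := by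
    nlinarith [mul_le_mul_of_nonneg_right hs3 (by positivity : 0 ≤ s * ε ^ 2 * e)]
  nlinarith [mul_le_mul_of_nonneg_left hgrowth he0]

lemma chiSq_le_of_abs_sub_le {ι : Type*} [Fintype ι] {X p : ι → ℝ} {e c : ℝ}
    (hp : ∀ i, 0 < p i) (he : 0 < e) (h : ∀ i, |X i - p i * e| ≤ c * √(p i) * e) :
    ∑ i, (X i - p i * e) ^ 2 / (p i * e) ≤ Fintype.card ι * (c ^ 2 * e) := by
  rw [← nsmul_eq_mul, ← card_univ, ← sum_const]
  refine sum_le_sum fun i _ ↦ ?_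
  rw [div_le_iff₀ (mul_pos (hp i) he)]
  calc (X i - p i * e) ^ 2 ≤ (c * √(p i) * e) ^ 2 :=
        sq_le_sq' (abs_le.1 (h i)).1 (abs_le.1 (h i)).2
    _ = c ^ 2 * e * (p i * e) := by rw [mul_pow, mul_pow, sq_sqrt (hp i).le]; ring

lemma sum_two_le_card_eq {V : Type*} [Fintype V] (g : ℕ → ℝ) :
    ∑ S ∈ univ.filter (fun S : Finset V ↦ 2 ≤ S.card), g S.card
      = ∑ k ∈ Icc 2 (Fintype.card V), (Fintype.card V).choose k * g k := by
  rw [sum_filter, ← powerset_univ, sum_powerset_apply_card (fun k ↦ if 2 ≤ k then g k else 0),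
    card_univ]
  simp_rw [smul_ite, smul_zero, nsmul_eq_mul]
  rw [← sum_filter]
  congr 1
  ext k
  simp only [mem_filter, mem_range, mem_Icc]
  omega

namespace ProbabilityTheory

variable {Ω ι : Type*} [MeasurableSpace Ω] {μ : Measure Ω} [IsProbabilityMeasure μ]

lemma integrable_of_zero_or_one {X : Ω → ℝ} (hX : Measurable X) (h01 : ∀ ω, X ω = 0 ∨ X ω = 1) :
    Integrable X μ :=
  .of_bound hX.aestronglyMeasurable 1 <| .of_forall fun ω ↦ by rcases h01 ω with h | h <;> simp [h]

lemma integrable_exp_mul_of_zero_or_one {X : Ω → ℝ} (hX : Measurable X)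
    (h01 : ∀ ω, X ω = 0 ∨ X ω = 1) (s : ℝ) : Integrable (fun ω ↦ exp (s * X ω)) μ := by
  simp_rw [exp_mul_of_zero_or_one (h01 _)]
  exact (integrable_const 1).add ((integrable_of_zero_or_one hX h01).const_mul _)

lemma mgf_of_zero_or_one {X : Ω → ℝ} (hX : Measurable X) (h01 : ∀ ω, X ω = 0 ∨ X ω = 1)
    (s : ℝ) : mgf X μ s = 1 + (exp s - 1) * μ[X] := by
  simp_rw [mgf, exp_mul_of_zero_or_one (h01 _)]
  rw [integral_add (integrable_const 1) ((integrable_of_zero_or_one hX h01).const_mul _),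
    integral_const_mul]
  simp

lemma mgf_sum_le_of_zero_or_one {X : ι → Ω → ℝ} (hindep : iIndepFun X μ)
    (hX : ∀ i, Measurable (X i)) (h01 : ∀ i ω, X i ω = 0 ∨ X i ω = 1) {q : ℝ}
    (hq : ∀ i, μ[X i] = q) (E : Finset ι) (s : ℝ) :
    mgf (∑ i ∈ E, X i) μ s ≤ exp (E.card * q * (exp s - 1)) := by
  rw [hindep.mgf_sum hX, mul_assoc, exp_nat_mul, ← prod_const]
  refine prod_le_prod (fun _ _ ↦ mgf_nonneg) fun i _ ↦ ?_
  rw [mgf_of_zero_or_one (hX i) (h01 i), hq, mul_comm q]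
  linarith [add_one_le_exp ((exp s - 1) * q)]

lemma measureReal_abs_sum_sub_ge_le {X : ι → Ω → ℝ} (hindep : iIndepFun X μ)
    (hX : ∀ i, Measurable (X i)) (h01 : ∀ i ω, X i ω = 0 ∨ X i ω = 1) {q : ℝ} (hq0 : 0 ≤ q)
    (hq : ∀ i, μ[X i] = q) (E : Finset ι) (t : ℝ) {θ : ℝ} (hθ : 0 ≤ θ) :
    μ.real {ω | t ≤ |∑ i ∈ E, X i ω - q * E.card|}
      ≤ 2 * exp (-(θ * t) + E.card * q * (exp θ - 1 - θ)) := by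
  have hint (s : ℝ) : Integrable (fun ω ↦ exp (s * (∑ i ∈ E, X i) ω)) μ :=
    hindep.integrable_exp_mul_sum hX fun i _ ↦ integrable_exp_mul_of_zero_or_one (hX i) (h01 i) s
  have hupper : μ.real {ω | q * E.card + t ≤ ∑ i ∈ E, X i ω}
      ≤ exp (-(θ * t) + E.card * q * (exp θ - 1 - θ)) := by
    refine (measure_ge_le_exp_mul_mgf (q * E.card + t) hθ (hint θ)).trans' ?_ |>.trans ?_
    · simp [Finset.sum_apply]
    · grw [mgf_sum_le_of_zero_or_one hindep hX h01 hq, ← exp_add]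
      exact (congrArg exp (by ring)).le
  have hlower : μ.real {ω | ∑ i ∈ E, X i ω ≤ q * E.card - t}
      ≤ exp (-(θ * t) + E.card * q * (exp θ - 1 - θ)) := by
    refine (measure_le_le_exp_mul_mgf (q * E.card - t) (neg_nonpos.2 hθ) (hint (-θ))).trans' ?_
      |>.trans ?_
    · simp [Finset.sum_apply]
    · grw [mgf_sum_le_of_zero_or_one hindep hX h01 hq, ← exp_add, ← exp_neg_sub_one_add_le hθ]
      exact (congrArg exp (by ring)).le
  have hsplit : {ω | t ≤ |∑ i ∈ E, X i ω - q * E.card|}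
      ⊆ {ω | q * E.card + t ≤ ∑ i ∈ E, X i ω} ∪ {ω | ∑ i ∈ E, X i ω ≤ q * E.card - t} := by
    intro ω (hω : t ≤ |_|)
    rcases le_abs'.1 hω with h | h
    · right; change (_ : ℝ) ≤ _; linarith
    · left; change (_ : ℝ) ≤ _; linarith
  grw [measureReal_mono hsplit, measureReal_union_le, hupper, hlower, two_mul]

lemma measureReal_abs_card_filter_sub_ge_le {α : Type*} [DecidableEq α] [MeasurableSpace α]
    [MeasurableSingletonClass α] {D : ι → Ω → α} (hindep : iIndepFun D μ)
    (hD : ∀ i, Measurable (D i)) {a : α} {q : ℝ} (hq0 : 0 ≤ q)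
    (hq : ∀ i, μ.real {ω | D i ω = a} = q)
    (E : Finset ι) (t : ℝ) {θ : ℝ} (hθ : 0 ≤ θ) :
    μ.real {ω | t ≤ |((E.filter fun i ↦ D i ω = a).card : ℝ) - q * E.card|}
      ≤ 2 * exp (-(θ * t) + E.card * q * (exp θ - 1 - θ)) := by
  set X : ι → Ω → ℝ := fun i ↦ ({a} : Set α).indicator 1 ∘ D i
  have hX (i : ι) : Measurable (X i) :=
    (measurable_const.indicator (measurableSet_singleton a)).comp (hD i)
  have h01 (i : ι) (ω : Ω) : X i ω = 0 ∨ X i ω = 1 := by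
    by_cases h : D i ω = a <;> simp [X, h]
  have hmean (i : ι) : μ[X i] = q := by
    rw [← hq i]
    exact integral_indicator_one (hD i (measurableSet_singleton a))
  have hcount (ω : Ω) : ((E.filter fun i ↦ D i ω = a).card : ℝ) = ∑ i ∈ E, X i ω := by
    rw [natCast_card_filter]
    exact sum_congr rfl fun i _ ↦ by simp [X, Pi.single_apply]
  simp_rw [hcount]
  exact measureReal_abs_sum_sub_ge_le
    (hindep.comp _ fun _ ↦ measurable_const.indicator (measurableSet_singleton a))
    hX h01 hq0 hmean E t hθ

lemma measureReal_abs_card_filter_sub_ge_le_exp {α : Type*} [DecidableEq α] [MeasurableSpace α]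
    [MeasurableSingletonClass α] {D : ι → Ω → α} (hindep : iIndepFun D μ)
    (hD : ∀ i, Measurable (D i)) {a : α} {q δ ε K : ℝ} (hq : ∀ i, μ.real {ω | D i ω = a} = q)
    (hδ : 0 < δ) (hδq : δ ≤ q) (hδ9 : δ ≤ 1 / 9) (hε : 0 < ε) (hε1 : ε ≤ 1) (hK : 0 ≤ K)
    (E : Finset ι) (hE : 18 / (δ * ε ^ 2) * K ≤ E.card) :
    μ.real {ω | ε / 3 * √q * E.card ≤ |((E.filter fun i ↦ D i ω = a).card : ℝ) - q * E.card|}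
      ≤ 2 * exp (-(6 * K)) := by
  have hE' : 18 * K ≤ δ * ε ^ 2 * E.card := by
    rwa [div_mul_eq_mul_div, div_le_iff₀' (by positivity)] at hE
  obtain ⟨θ, hθ, hexp⟩ := exists_chernoff_exponent hδ hδq hδ9 hε hε1 hK hE'
  grw [measureReal_abs_card_filter_sub_ge_le hindep hD (hδ.le.trans hδq) hq E _ hθ, ← hexp]

lemma one_sub_le_measureReal_of_compl_subset {s t : Set Ω} (h : sᶜ ⊆ t) :
    1 - μ.real t ≤ μ.real s := by
  have := measureReal_union_le (μ := μ) s sᶜ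
  rw [Set.union_compl_self, probReal_univ] at this
  linarith [measureReal_mono (μ := μ) h]

end ProbabilityTheory

namespace SimpleGraph

variable {V : Type*} [Fintype V] [DecidableEq V] (G : SimpleGraph V) [DecidableRel G.Adj]

noncomputable def edgesWithin (S : Finset V) : Finset G.edgeSet :=
  univ.filter fun f : G.edgeSet ↦ ∀ v ∈ (f : Sym2 V), v ∈ S

variable {G}

lemma two_le_card_of_edgesWithin_nonempty {S : Finset V} (h : (G.edgesWithin S).Nonempty) :
    2 ≤ S.card := by
  obtain ⟨⟨f, hf⟩, hfS⟩ := h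
  induction f using Sym2.ind with
  | h a b =>
    have hab : ∀ v ∈ s(a, b), v ∈ S := (mem_filter.1 hfS).2
    exact one_lt_card.2 ⟨a, hab a (by simp), b, hab b (by simp), G.ne_of_adj hf⟩

lemma edgesWithin_nonempty_of_mul_card_le {c L : ℝ} (hc : 0 < c) (hL : 0 < L) {S : Finset V}
    (hS : S.Nonempty) (h : c * S.card * L ≤ (G.edgesWithin S).card) :
    (G.edgesWithin S).Nonempty := by
  rw [← card_pos, ← Nat.cast_pos (α := ℝ)]
  exact h.trans_lt' (by have := hS.card_pos; positivity)

lemma card_edgesWithin_div_le_sSup {S : Finset V} (hS : S.Nonempty) :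
    ((G.edgesWithin S).card : ℝ) / S.card
      ≤ sSup {ρ : ℝ | ∃ T : Finset V, T.Nonempty ∧ ρ = (G.edgesWithin T).card / T.card} := by
  refine le_csSup (Set.Finite.bddAbove ?_) ⟨S, hS, rfl⟩
  exact (Set.finite_range fun T : Finset V ↦ ((G.edgesWithin T).card : ℝ) / T.card).subset
    fun _ ⟨T, _, hT⟩ ↦ ⟨T, hT.symm⟩

lemma measureReal_biUnion_digit_deviation_le {Ω β : Type*} [MeasurableSpace Ω] {μ : Measure Ω}
    [IsProbabilityMeasure μ] [Fintype β] [DecidableEq β] [MeasurableSpace β]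
    [MeasurableSingletonClass β]
    {D : G.edgeSet → Ω → β} (hindep : iIndepFun D μ) (hD : ∀ f, Measurable (D f))
    {p : β → ℝ} (hp : ∀ f b, μ.real {ω | D f ω = b} = p b) {δ ε : ℝ} (hδ : 0 < δ)
    (hδp : ∀ b, δ ≤ p b) (hδ9 : δ ≤ 1 / 9) (hε : 0 < ε) (hε1 : ε ≤ 1)
    (hV : 2 ≤ Fintype.card V) :
    μ.real (⋃ S ∈ univ.filter (fun S : Finset V ↦ S.Nonempty ∧
          18 / (δ * ε ^ 2) * S.card * log (Fintype.card V) ≤ (G.edgesWithin S).card),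
        ⋃ b, {ω | ε / 3 * √(p b) * (G.edgesWithin S).card
          ≤ |(((G.edgesWithin S).filter fun f ↦ D f ω = b).card : ℝ)
              - p b * (G.edgesWithin S).card|})
      ≤ 2 * Fintype.card β * ∑ k ∈ Icc 2 (Fintype.card V),
          (Fintype.card V).choose k * (((Fintype.card V : ℝ) ^ (6 * k))⁻¹) := by
  set N := Fintype.card V
  have hL : 0 < log N := log_pos (by exact_mod_cast hV)
  have hrelevant : univ.filter (fun S : Finset V ↦ S.Nonempty ∧
      18 / (δ * ε ^ 2) * S.card * log N ≤ (G.edgesWithin S).card)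
      ⊆ univ.filter (fun S : Finset V ↦ 2 ≤ S.card) := by
    intro S hS
    obtain ⟨hne, hthr⟩ := (mem_filter.1 hS).2
    exact mem_filter.2 ⟨mem_univ S, two_le_card_of_edgesWithin_nonempty
      (edgesWithin_nonempty_of_mul_card_le (by positivity) hL hne hthr)⟩
  calc
    _ ≤ ∑ S ∈ univ.filter (fun S : Finset V ↦ S.Nonempty ∧
          18 / (δ * ε ^ 2) * S.card * log N ≤ (G.edgesWithin S).card),
          ∑ b, 2 * ((N : ℝ) ^ (6 * S.card))⁻¹ := by
      refine (measureReal_biUnion_finset_le _ _).trans (sum_le_sum fun S hS ↦ ?_)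
      refine (measureReal_iUnion_fintype_le _).trans (sum_le_sum fun b _ ↦ ?_)
      rw [← exp_neg_mul_log_natCast (by omega), Nat.cast_mul, Nat.cast_ofNat, mul_assoc (6 : ℝ)]
      exact measureReal_abs_card_filter_sub_ge_le_exp hindep hD (fun f ↦ hp f b) hδ (hδp b) hδ9
        hε hε1 (by positivity : (0 : ℝ) ≤ S.card * log N) _
        (by rw [← mul_assoc]; exact (mem_filter.1 hS).2.2)
    _ ≤ ∑ S ∈ univ.filter (fun S : Finset V ↦ 2 ≤ S.card),
        2 * Fintype.card β * ((N : ℝ) ^ (6 * S.card))⁻¹ := by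
      simp_rw [sum_const, card_univ, nsmul_eq_mul, ← mul_assoc, mul_comm (Fintype.card β : ℝ)]
      exact sum_le_sum_of_subset_of_nonneg hrelevant fun _ _ _ ↦ by positivity
    _ = _ := by
      rw [← mul_sum, sum_two_le_card_eq fun k ↦ ((N : ℝ) ^ (6 * k))⁻¹]

end SimpleGraph

/-- **Corollary 1 of the paper.**  Under the null hypothesis (edge digits are
i.i.d. from the digit distribution `p`), with probability at least
`1 − 18·∑_{k=2}^{n} C(n,k)·n^(−6k)`, every nonempty `S ⊆ V` with
`e(S) ≥ (18/(δ·ε²))·|S|·log n` has average chi-square score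
`ψ(S) = χ²(S)/|S| ≤ ε²·e(S)/|S|`, and in particular `ψ(S)` is at most the
density `max_{T ≠ ∅} e(T)/|T|` of the densest subgraph of `G`. -/
theorem antibenford_corollary
    {V : Type*} [Fintype V] [DecidableEq V]
    (n : ℕ) (hn : 2 ≤ n) (hcard : Fintype.card V = n)
    (G : SimpleGraph V) [DecidableRel G.Adj]
    {Ω : Type*} [MeasurableSpace Ω] (μ : Measure Ω) [IsProbabilityMeasure μ]
    (p : Fin 9 → ℝ) (hp : ∀ d, 0 < p d) (hsum : ∑ d, p d = 1)
    (δ : ℝ) (hδ : δ = Finset.univ.inf' Finset.univ_nonempty p)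
    (ε : ℝ) (hε0 : 0 < ε) (hε1 : ε < 1)
    (D : G.edgeSet → Ω → Fin 9)
    (hmeas : ∀ f, Measurable (D f))
    (hindep : iIndepFun D μ)
    (hdist : ∀ f d, μ {ω | D f ω = d} = ENNReal.ofReal (p d)) :
    1 - 18 * ∑ k ∈ Finset.Icc 2 n, (n.choose k : ℝ) * ((n : ℝ) ^ (6 * k))⁻¹
      ≤ (μ {ω | ∀ S : Finset V, S.Nonempty →
          (18 / (δ * ε ^ 2)) * S.card * Real.log n
              ≤ ((Finset.univ.filter
                  (fun f : G.edgeSet => ∀ v ∈ (f : Sym2 V), v ∈ S)).card : ℝ) →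
          ((∑ d : Fin 9,
              (((Finset.univ.filter
                  (fun f : G.edgeSet =>
                    (∀ v ∈ (f : Sym2 V), v ∈ S) ∧ D f ω = d)).card : ℝ)
                - p d * ((Finset.univ.filter
                  (fun f : G.edgeSet => ∀ v ∈ (f : Sym2 V), v ∈ S)).card : ℝ)) ^ 2
                / (p d * ((Finset.univ.filter
                  (fun f : G.edgeSet => ∀ v ∈ (f : Sym2 V), v ∈ S)).card : ℝ)))
              / S.card
            ≤ ε ^ 2 * ((Finset.univ.filter
                  (fun f : G.edgeSet => ∀ v ∈ (f : Sym2 V), v ∈ S)).card : ℝ)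
                / S.card
          ∧ (∑ d : Fin 9,
              (((Finset.univ.filter
                  (fun f : G.edgeSet =>
                    (∀ v ∈ (f : Sym2 V), v ∈ S) ∧ D f ω = d)).card : ℝ)
                - p d * ((Finset.univ.filter
                  (fun f : G.edgeSet => ∀ v ∈ (f : Sym2 V), v ∈ S)).card : ℝ)) ^ 2
                / (p d * ((Finset.univ.filter
                  (fun f : G.edgeSet => ∀ v ∈ (f : Sym2 V), v ∈ S)).card : ℝ)))
              / S.card
            ≤ sSup {ρ : ℝ | ∃ T : Finset V, T.Nonempty ∧
                ρ = ((Finset.univ.filter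
                  (fun f : G.edgeSet => ∀ v ∈ (f : Sym2 V), v ∈ T)).card : ℝ)
                    / T.card})}).toReal := by
  obtain ⟨d₀, -, hd₀⟩ := exists_mem_eq_inf' univ_nonempty p
  have hδp (d : Fin 9) : δ ≤ p d := hδ ▸ inf'_le p (mem_univ d)
  have hδ9 : δ ≤ 1 / 9 := by
    have := card_nsmul_le_sum univ p δ fun d _ ↦ hδp d
    rw [hsum, card_univ, Fintype.card_fin, nsmul_eq_mul, Nat.cast_ofNat] at this
    linarith
  have hpd (f : G.edgeSet) (d : Fin 9) : μ.real {ω | D f ω = d} = p d := by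
    rw [measureReal_def, hdist, ENNReal.toReal_ofReal (hp d).le]
  have hδ0 : 0 < δ := hδ ▸ hd₀ ▸ hp d₀
  have hbad := G.measureReal_biUnion_digit_deviation_le hindep hmeas hpd hδ0 hδp hδ9 hε0 hε1.le
    (hcard ▸ hn)
  rw [hcard, Fintype.card_fin, Nat.cast_ofNat, show (2 : ℝ) * 9 = 18 by norm_num] at hbad
  refine (sub_le_sub_left hbad 1).trans (one_sub_le_measureReal_of_compl_subset ?_)
  intro ω hω
  by_contra hgood
  refine hω fun S hS hthr ↦ ?_
  simp only [← filter_filter, ← SimpleGraph.edgesWithin.eq_1] at hthr ⊢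
  simp only [Set.mem_iUnion, not_exists, mem_filter, mem_univ, true_and, Set.mem_ofPred_eq,
    not_le] at hgood
  have he : (0 : ℝ) < (G.edgesWithin S).card := Nat.cast_pos.2 <| card_pos.2 <|
    G.edgesWithin_nonempty_of_mul_card_le (by positivity)
      (log_pos (by exact_mod_cast hn : (1 : ℝ) < n)) hS hthr
  refine (fun hψ ↦ ⟨hψ, hψ.trans ?_⟩) (div_le_div_of_nonneg_right ?_ (Nat.cast_nonneg _))
  · refine (chiSq_le_of_abs_sub_le hp he fun d ↦ (hgood S ⟨hS, hthr⟩ d).le).trans_eq ?_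
    simp only [Fintype.card_fin]
    ring
  · refine (div_le_div_of_nonneg_right ?_ (Nat.cast_nonneg _)).trans
      (G.card_edgesWithin_div_le_sSup hS)
    exact mul_le_of_le_one_left (Nat.cast_nonneg _) (pow_le_one₀ hε0.le hε1.le)
end
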